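/- arXiv:2411.15282 — 2 statements merged into one kernel-verified Lean document; each statement's English description precedes it below -/
import Mathlib

section
/- Let G be a connected graph with terminals R = \{v_0, ..., v_\alpha\} where each v_i (1 \le i \le \alpha - 1) is a cutvertex separating v_0 from v_\alpha, and suppose the ordering v_0, v_1, ..., v_\alpha is such that every v_0–v_\alpha path visits the terminals in this order. Then every connected component of G - R has neighbors among at most two terminals, and if it has exactly two, they are consecutive in the ordering (v_{i-1} and v_i for some i). -/
/-!
Suppose a component `C` of `G - R` attaches to `vᵢ` and `vⱼ` with `i + 1 < j`, and let
`k = i + 1`. Fix a `v₀`–`v_α` path `P`. All terminals lie on `P` (the inner ones because they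
are cutvertices), with `vₖ` between `vᵢ` and `vⱼ`. Replacing the stretch of `P` from `vᵢ` to `vⱼ`
by a detour through `C` gives a `v₀`–`v_α` walk avoiding `vₖ`, contradicting that `vₖ`
separates `v₀` from `v_α`.
-/

namespace SimpleGraph.Walk

variable {V : Type*} [DecidableEq V] {G : SimpleGraph V} {u v w x : V}

lemma idxOf_le_of_mem_support_takeUntil (p : G.Walk u v) (hw : w ∈ p.support)
    (hx : x ∈ (p.takeUntil w hw).support) : p.support.idxOf x ≤ p.support.idxOf w := by
  rw [takeUntil_eq_take, support_copy, support_take] at hx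
  have := (List.mem_take_iff_idxOf_lt (List.mem_of_mem_take hx)).1 hx
  omega

lemma IsPath.idxOf_le_of_mem_support_dropUntil {p : G.Walk u v} (hp : p.IsPath)
    (hw : w ∈ p.support) (hx : x ∈ (p.dropUntil w hw).support) :
    p.support.idxOf w ≤ p.support.idxOf x := by
  have hsplit : (p.takeUntil w hw).support ++ (p.dropUntil w hw).support.tail = p.support := by
    rw [← support_append, take_spec]
  have hnodup := hp.support_nodup
  rw [← hsplit] at hnodup ⊢
  rw [← cons_tail_support] at hx
  rcases List.mem_cons.1 hx with rfl | hx
  · rfl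
  have hwt : w ∈ (p.takeUntil w hw).support := end_mem_support _
  have hxt : x ∉ (p.takeUntil w hw).support := fun h => List.disjoint_of_nodup_append hnodup h hx
  rw [List.idxOf_append_of_mem hwt, List.idxOf_append_of_notMem hxt]
  have := List.idxOf_lt_length_of_mem hwt
  omega

lemma IsPath.mem_support_of_idxOf_le {p : G.Walk u v} (hp : p.IsPath) {a b z : V}
    (hz : ∀ r : G.Walk u v, z ∈ r.support) (ha : a ∈ p.support) (hb : b ∈ p.support)
    (haz : p.support.idxOf a ≤ p.support.idxOf z) (hzb : p.support.idxOf z ≤ p.support.idxOf b)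
    (q : G.Walk a b) : z ∈ q.support := by
  by_contra hzq
  have hzp : z ∈ p.support := hz p
  have hza_ne : z ≠ a := fun h => hzq (h ▸ q.start_mem_support)
  have hzb_ne : z ≠ b := fun h => hzq (h ▸ q.end_mem_support)
  -- splice `q` into `p` in place of its stretch from `a` to `b`
  have hmem := hz ((p.takeUntil a ha).append (q.append (p.dropUntil b hb)))
  rw [support_append] at hmem
  rcases List.mem_append.1 hmem with hpre | hrest
  · have := idxOf_le_of_mem_support_takeUntil p ha hpre
    exact hza_ne ((List.idxOf_inj hzp).1 (by omega))
  have hrest := List.mem_of_mem_tail hrest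
  rw [support_append] at hrest
  rcases List.mem_append.1 hrest with hmid | hsuf
  · exact hzq hmid
  · have := hp.idxOf_le_of_mem_support_dropUntil hb (List.mem_of_mem_tail hsuf)
    exact hzb_ne ((List.idxOf_inj hzp).1 (by omega))

lemma mem_support_of_not_reachable_induce {z : V} {hu : u ≠ z} {hv : v ≠ z}
    (h : ¬ (G.induce {x | x ≠ z}).Reachable ⟨u, hu⟩ ⟨v, hv⟩) (r : G.Walk u v) :
    z ∈ r.support := by
  by_contra hz
  exact h (r.induce _ fun x hx => show x ≠ z from fun hxz => hz (hxz ▸ hx)).reachable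

end SimpleGraph.Walk

open SimpleGraph

lemma SimpleGraph.Reachable.exists_walk_of_induce {V : Type*} {G : SimpleGraph V} {s : Set V}
    {x y : s} (h : (G.induce s).Reachable x y) {a b : V} (ha : G.Adj a x) (hb : G.Adj y b) :
    ∃ q : G.Walk a b, ∀ z ∈ q.support, z = a ∨ z = b ∨ z ∈ s := by
  obtain ⟨w⟩ := h
  obtain ⟨w', hw'⟩ : ∃ w' : G.Walk x y, ∀ z ∈ w'.support, z ∈ s :=
    ⟨w.map (Embedding.induce s).toHom, fun z hz => by
      obtain ⟨z, -, rfl⟩ := List.mem_map.1 (Walk.support_map (Embedding.induce s).toHom w ▸ hz)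
      exact z.2⟩
  refine ⟨.cons ha (w'.concat hb), fun z hz => ?_⟩
  rw [Walk.support_cons, Walk.support_concat] at hz
  simp only [List.mem_cons, List.mem_append, List.not_mem_nil, or_false] at hz
  rcases hz with rfl | hz | rfl
  · exact .inl rfl
  · exact .inr (.inr (hw' z hz))
  · exact .inr (.inl rfl)

theorem terminal_mem_support_of_lt_of_lt {V : Type*} [DecidableEq V] {G : SimpleGraph V}
    (hG : G.Connected) {α : ℕ} {vs : Fin (α + 1) → V}
    (hcut : ∀ k : Fin (α + 1), 0 < k.val → k.val < α →
      ∀ r : G.Walk (vs 0) (vs (Fin.last α)), vs k ∈ r.support)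
    (horder : ∀ (p : G.Walk (vs 0) (vs (Fin.last α))), p.IsPath →
      ∀ i j : Fin (α + 1), i ≤ j →
        List.idxOf (vs i) p.support ≤ List.idxOf (vs j) p.support)
    {i k j : Fin (α + 1)} (hik : i < k) (hkj : k < j) (q : G.Walk (vs i) (vs j)) :
    vs k ∈ q.support := by
  obtain ⟨p, hp⟩ : ∃ p : G.Walk (vs 0) (vs (Fin.last α)), p.IsPath :=
    ⟨_, ((hG.preconnected _ _).some.toPath).2⟩
  have hjα : j.val ≤ α := Nat.lt_succ_iff.mp j.isLt
  have hk := hcut k (by omega) (by omega)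
  have hi : vs i ∈ p.support := by
    rcases Nat.eq_zero_or_pos i.val with h | h
    · rw [show i = 0 from Fin.ext h]; exact p.start_mem_support
    · exact hcut i h (by omega) p
  have hj : vs j ∈ p.support := by
    rcases Nat.lt_or_ge j.val α with h | h
    · exact hcut j (by omega) h p
    · rw [show j = Fin.last α from Fin.ext (by rw [Fin.val_last]; omega)]; exact p.end_mem_support
  exact hp.mem_support_of_idxOf_le hk hi hj (horder p hp i k hik.le) (horder p hp k j hkj.le) q

theorem component_attaches_consecutive_general {V : Type*} [DecidableEq V]
    (G : SimpleGraph V) (hG : G.Connected)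
    (α : ℕ) (vs : Fin (α + 1) → V) (hinj : Function.Injective vs)
    (R : Set V) (hR : R = Set.range vs)
    (hsep : ∀ i : Fin (α + 1), 0 < i.val → i.val < α →
      ∀ (h0 : vs 0 ∈ {x | x ≠ vs i}) (hα : vs (Fin.last α) ∈ {x | x ≠ vs i}),
        ¬ (G.induce {x | x ≠ vs i}).Reachable ⟨vs 0, h0⟩ ⟨vs (Fin.last α), hα⟩)
    (horder : ∀ (p : G.Walk (vs 0) (vs (Fin.last α))), p.IsPath →
      ∀ i j : Fin (α + 1), i ≤ j →
        List.idxOf (vs i) p.support ≤ List.idxOf (vs j) p.support) :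
    ∀ (c0 : V) (hc0 : c0 ∉ R) (i j : Fin (α + 1)),
      (∃ x, ∃ hx : x ∉ R,
        (G.induce {y | y ∉ R}).Reachable ⟨c0, hc0⟩ ⟨x, hx⟩ ∧ G.Adj x (vs i)) →
      (∃ x, ∃ hx : x ∉ R,
        (G.induce {y | y ∉ R}).Reachable ⟨c0, hc0⟩ ⟨x, hx⟩ ∧ G.Adj x (vs j)) →
      i = j ∨ i.val + 1 = j.val ∨ j.val + 1 = i.val := by
  have hcut : ∀ k : Fin (α + 1), 0 < k.val → k.val < α →
      ∀ r : G.Walk (vs 0) (vs (Fin.last α)), vs k ∈ r.support := fun k h0 hα =>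
    Walk.mem_support_of_not_reachable_induce
      (hsep k h0 hα (hinj.ne (Fin.ne_of_val_ne (by rw [Fin.val_zero]; omega)))
        (hinj.ne (Fin.ne_of_val_ne (by rw [Fin.val_last]; omega))))
  intro c0 hc0 i j ⟨x, hx, hcx, hxi⟩ ⟨y, hy, hcy, hyj⟩
  wlog hij : i ≤ j generalizing i j x y
  · have := this j i y hy hcy hyj x hx hcx hxi (le_of_not_ge hij)
    omega
  by_contra! hfar
  let k : Fin (α + 1) := ⟨i.val + 1, by omega⟩
  obtain ⟨q, hq⟩ := (hcx.symm.trans hcy).exists_walk_of_induce hxi.symm hyj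
  have hkq := terminal_mem_support_of_lt_of_lt hG hcut horder (k := k)
    (Fin.lt_def.2 (Nat.lt_succ_self _)) (Fin.lt_def.2 (show i.val + 1 < j.val by omega)) q
  rcases hq _ hkq with h | h | h
  · exact Nat.succ_ne_self _ (congrArg Fin.val (hinj h))
  · exact hfar.2.1 (congrArg Fin.val (hinj h))
  · exact h (hR ▸ Set.mem_range_self k)

/-- Suppose the terminals `v₀, …, v_α` are such that every intermediate one is a
cutvertex separating `v₀` from `v_α`, and every `v₀`–`v_α` path visits them in the
order `v₀, v₁, …, v_α`. Then every connected component of `G - R` attaches to at most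
two terminals, and any two terminals it attaches to are consecutive. -/
theorem component_attaches_consecutive {V : Type*} [Fintype V] [DecidableEq V]
    (G : SimpleGraph V) (hG : G.Connected)
    (α : ℕ) (vs : Fin (α + 1) → V) (hinj : Function.Injective vs)
    (R : Set V) (hR : R = Set.range vs)
    (hsep : ∀ i : Fin (α + 1), 0 < i.val → i.val < α →
      ∀ (h0 : vs 0 ∈ {x | x ≠ vs i}) (hα : vs (Fin.last α) ∈ {x | x ≠ vs i}),
        ¬ (G.induce {x | x ≠ vs i}).Reachable ⟨vs 0, h0⟩ ⟨vs (Fin.last α), hα⟩)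
    (horder : ∀ (p : G.Walk (vs 0) (vs (Fin.last α))), p.IsPath →
      ∀ i j : Fin (α + 1), i ≤ j →
        List.idxOf (vs i) p.support ≤ List.idxOf (vs j) p.support) :
    ∀ (c0 : V) (hc0 : c0 ∉ R) (i j : Fin (α + 1)),
      (∃ x, ∃ hx : x ∉ R,
        (G.induce {y | y ∉ R}).Reachable ⟨c0, hc0⟩ ⟨x, hx⟩ ∧ G.Adj x (vs i)) →
      (∃ x, ∃ hx : x ∉ R,
        (G.induce {y | y ∉ R}).Reachable ⟨c0, hc0⟩ ⟨x, hx⟩ ∧ G.Adj x (vs j)) →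
      i = j ∨ i.val + 1 = j.val ∨ j.val + 1 = i.val :=
  component_attaches_consecutive_general G hG α vs hinj R hR hsep horder
end

section
/- Let G be a connected graph such that every tree subgraph of G has fewer than r leaves, for some r \ge 3. Then the set of vertices of G of degree at least 3 that are pairwise at distance at least 3 from each other has size at most r. -/
/-!
The edges of `G` at the vertices of `S` form vertex-disjoint stars: since the vertices of `S`
are pairwise at distance at least 3, no two of them are adjacent and no vertex sees two of them.
This star forest is acyclic, so it extends to a spanning tree `T` of `G`, in which every vertex
of `S` keeps degree at least 3. In a tree `∑ v, (deg v - 2) = -2`, which forces at least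
`#S + 2` leaves.
-/

open Finset

def subgraphLeaves {V : Type*} {G : SimpleGraph V} (H : G.Subgraph) : Set V :=
  {v ∈ H.verts | (H.neighborSet v).ncard = 1}

namespace SimpleGraph

variable {V : Type*} {G T : SimpleGraph V}

def starForest (G : SimpleGraph V) (S : Set V) : SimpleGraph V where
  Adj u v := G.Adj u v ∧ (u ∈ S ∨ v ∈ S)
  symm := ⟨fun _ _ h ↦ ⟨h.1.symm, h.2.symm⟩⟩
  loopless := ⟨fun _ h ↦ G.loopless.irrefl _ h.1⟩

lemma starForest_le (S : Set V) : G.starForest S ≤ G := fun _ _ h ↦ h.1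

lemma isAcyclic_starForest {S : Set V} (hS : G.IsIndepSet S)
    (hnbr : ∀ w, (G.neighborSet w ∩ S).Subsingleton) : (G.starForest S).IsAcyclic := by
  -- once the edge `uv` is deleted, `v ∉ S` is isolated: its only neighbour in `S` was `u`
  have isBridge_of_notMem {u v : V} (huv : (G.starForest S).Adj u v) (hv : v ∉ S) :
      (G.starForest S).IsBridge s(u, v) := by
    refine isBridge_iff.mpr (not_reachable_of_neighborSet_right_eq_empty huv.ne ?_)
    refine Set.eq_empty_of_forall_notMem fun w hw ↦ ?_
    obtain ⟨hvw, hne⟩ := deleteEdges_adj.mp hw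
    have hu : u ∈ S := huv.2.resolve_right hv
    have hw : w ∈ S := hvw.2.resolve_left hv
    obtain rfl := hnbr v ⟨hvw.1, hw⟩ ⟨huv.1.symm, hu⟩
    exact hne (by simp [Sym2.eq_swap])
  refine isAcyclic_iff_forall_adj_isBridge.mpr fun u v huv ↦ ?_
  rcases huv.2 with hu | hu
  · exact isBridge_of_notMem huv fun hv ↦ hS hu hv huv.ne huv.1
  · rw [Sym2.eq_swap]
    exact isBridge_of_notMem huv.symm fun hv ↦ hS hu hv huv.ne.symm huv.1.symm

lemma IsIndepSet.of_three_le_dist {S : Set V}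
    (h : ∀ u ∈ S, ∀ v ∈ S, u ≠ v → 3 ≤ G.dist u v) : G.IsIndepSet S := by
  intro u hu v hv huv hadj
  have := h u hu v hv huv
  rw [dist_eq_one_iff_adj.mpr hadj] at this
  omega

lemma subsingleton_neighborSet_inter_of_three_le_dist {S : Set V}
    (h : ∀ u ∈ S, ∀ v ∈ S, u ≠ v → 3 ≤ G.dist u v) (w : V) :
    (G.neighborSet w ∩ S).Subsingleton := by
  rintro u ⟨hwu, hu⟩ v ⟨hwv, hv⟩
  by_contra huv
  have := (h u hu v hv huv).trans (G.dist_le (.cons hwu.symm (.cons hwv .nil)))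
  simp [Walk.length] at this

lemma degree_le_degree_of_starForest_le {S : Set V} (hT : G.starForest S ≤ T) {v : V}
    (hv : v ∈ S) [Fintype (G.neighborSet v)] [Fintype (T.neighborSet v)] :
    G.degree v ≤ T.degree v := by
  simp only [← card_neighborFinset_eq_degree]
  exact card_le_card fun w hw ↦ by
    simpa using hT ⟨(mem_neighborFinset _ _ _).mp hw, .inl hv⟩

lemma IsTree.sum_degree_sub_two [Fintype V] [DecidableRel T.Adj] (hT : T.IsTree) :
    ∑ v, ((T.degree v : ℤ) - 2) = -2 := by
  have hsum := T.sum_degrees_eq_twice_card_edges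
  have hcard := hT.card_edgeFinset
  rw [sum_sub_distrib, ← Nat.cast_sum, hsum, sum_const, card_univ, nsmul_eq_mul]
  push_cast
  omega

lemma IsTree.card_add_two_le_card_degree_eq_one [Fintype V] [DecidableEq V] [Nontrivial V]
    [DecidableRel T.Adj] (hT : T.IsTree) (S : Finset V) (hS : ∀ v ∈ S, 3 ≤ T.degree v) :
    #S + 2 ≤ #{v | T.degree v = 1} := by
  have hpos := hT.connected.preconnected.degree_pos_of_nontrivial
  -- in `∑ v, (deg v - 2)` leaves contribute `-1`, vertices of `S` at least `1`, others `≥ 0`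
  have hcontrib : ∀ v, ((if v ∈ S then 1 else 0 : ℤ) - if T.degree v = 1 then 1 else 0)
      ≤ (T.degree v : ℤ) - 2 := by
    intro v
    have := hpos v
    by_cases hv : v ∈ S
    · have := hS v hv
      simp only [hv, if_true]; split_ifs <;> omega
    · simp only [hv, if_false]; split_ifs <;> omega
  have := (sum_le_sum fun v _ ↦ hcontrib v).trans_eq hT.sum_degree_sub_two
  rw [sum_sub_distrib, sum_boole, sum_boole] at this
  simp only [filter_mem_eq_inter, univ_inter] at this
  omega

lemma isTree_coe_toSubgraph (h : T ≤ G) (hT : T.IsTree) : (toSubgraph T h).coe.IsTree :=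
  (Subgraph.spanningCoeEquivCoeOfSpanning _ (toSubgraph.isSpanning T h)).isTree_iff.mp hT

lemma ncard_subgraphLeaves_toSubgraph [Fintype V] [DecidableRel T.Adj] (h : T ≤ G) :
    (subgraphLeaves (toSubgraph T h)).ncard = #{v | T.degree v = 1} := by
  have : subgraphLeaves (toSubgraph T h) = ↑({v | T.degree v = 1} : Finset V) := by
    ext v
    have hdeg : ((toSubgraph T h).neighborSet v).ncard = T.degree v := by
      rw [← card_neighborSet_eq_degree, ← Nat.card_eq_fintype_card, Nat.card_coe_set_eq]
      rfl
    simp only [subgraphLeaves, Set.mem_ofPred_eq, hdeg]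
    simp
  rw [this, Set.ncard_coe_finset]

end SimpleGraph

theorem high_degree_scattered_bound_general {V : Type*} [Fintype V] [DecidableEq V]
    (G : SimpleGraph V) [DecidableRel G.Adj] (hG : G.Connected)
    (r : ℕ)
    (hleaves : ∀ H : G.Subgraph, H.coe.IsTree → (subgraphLeaves H).ncard < r)
    (S : Finset V)
    (hdeg : ∀ v ∈ S, 3 ≤ G.degree v)
    (hdist : ∀ u ∈ S, ∀ v ∈ S, u ≠ v → 3 ≤ G.dist u v) :
    S.card ≤ r := by
  classical
  rcases S.eq_empty_or_nonempty with rfl | ⟨s, hs⟩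
  · simp
  have : Nontrivial V := by
    obtain ⟨w, hsw⟩ := G.degree_pos_iff_exists_adj s |>.mp (by linarith [hdeg s hs])
    exact ⟨s, w, hsw.ne⟩
  obtain ⟨T, hST, hTG, hT⟩ :=
    hG.exists_isTree_le_of_le_of_isAcyclic (SimpleGraph.starForest_le (S : Set V))
    (SimpleGraph.isAcyclic_starForest (.of_three_le_dist hdist)
      (SimpleGraph.subsingleton_neighborSet_inter_of_three_le_dist hdist))
  have hTdeg : ∀ v ∈ S, 3 ≤ T.degree v := fun v hv ↦
    (hdeg v hv).trans (SimpleGraph.degree_le_degree_of_starForest_le hST hv)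
  have hleaf := hleaves _ (SimpleGraph.isTree_coe_toSubgraph hTG hT)
  rw [SimpleGraph.ncard_subgraphLeaves_toSubgraph] at hleaf
  have := hT.card_add_two_le_card_degree_eq_one S hTdeg
  omega

/-- In a connected graph in which every subtree has fewer than `r` leaves (`r ≥ 3`),
any set of vertices of degree at least 3 that are pairwise at distance at least 3
has size at most `r`. -/
theorem high_degree_scattered_bound {V : Type*} [Fintype V] [DecidableEq V]
    (G : SimpleGraph V) [DecidableRel G.Adj] (hG : G.Connected)
    (r : ℕ) (hr : 3 ≤ r)
    (hleaves : ∀ H : G.Subgraph, H.coe.IsTree → (subgraphLeaves H).ncard < r)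
    (S : Finset V)
    (hdeg : ∀ v ∈ S, 3 ≤ G.degree v)
    (hdist : ∀ u ∈ S, ∀ v ∈ S, u ≠ v → 3 ≤ G.dist u v) :
    S.card ≤ r :=
  high_degree_scattered_bound_general G hG r hleaves S hdeg hdist
end
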